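/- arXiv:2311.10710 — 7 statements merged into one kernel-verified Lean document; each statement's English description precedes it below -/
import Mathlib

section
/- Let ŷ: 𝒳 → [0,1] and define the mean prediction ŷ(γ) = Σ_{x∈𝒳} P(x|γ) ŷ(x) and the standard deviation σ(γ) = √(Σ_{x∈𝒳} P(x|γ) ŷ(x)² − ŷ(γ)²). Then the indicator I₁(γ) = |dŷ(γ)/dγ| satisfies I₁(γ) ≤ σ(γ)·√F(γ) ≤ √F(γ), i.e., it is a lower bound to the square root of the Fisher information. -/
/-!
Write `a x = ∂P(x|γ)/∂γ`, so that `dŷ(γ)/dγ = ∑ a x * ŷ x`. Since the probabilities sum to one,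
`∑ a x = 0` and the mean may be subtracted from `ŷ` for free:
`∑ a x * ŷ x = ∑ (a x / P x) * P x * (ŷ x - ŷ(γ))`. Cauchy–Schwarz with weights `P x` bounds this
by `√F · σ`, and `σ ≤ 1` because `ŷ` takes values in `[0, 1]`.
-/

open Finset Real

section WeightedSums

variable {ι : Type*} (s : Finset ι)

theorem Finset.sq_sum_mul_le_sum_sq_div_mul_sum_mul_sq {w : ι → ℝ} (hw : ∀ i ∈ s, 0 < w i)
    (a b : ι → ℝ) :
    (∑ i ∈ s, a i * b i) ^ 2 ≤ (∑ i ∈ s, a i ^ 2 / w i) * ∑ i ∈ s, w i * b i ^ 2 :=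
  sum_sq_le_sum_mul_sum_of_sq_le_mul s (fun i hi => div_nonneg (sq_nonneg _) (hw i hi).le)
    (fun i hi => mul_nonneg (hw i hi).le (sq_nonneg _)) fun i hi =>
      le_of_eq <| by field_simp [(hw i hi).ne']

theorem Finset.sum_mul_sub_sum_mul_sq {p : ι → ℝ} (hp : ∑ i ∈ s, p i = 1) (y : ι → ℝ) :
    ∑ i ∈ s, p i * (y i - ∑ j ∈ s, p j * y j) ^ 2 =
      ∑ i ∈ s, p i * y i ^ 2 - (∑ i ∈ s, p i * y i) ^ 2 := by
  set m := ∑ j ∈ s, p j * y j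
  have hexpand : ∀ i, p i * (y i - m) ^ 2 = p i * y i ^ 2 - 2 * m * (p i * y i) + m ^ 2 * p i :=
    fun i => by ring
  simp only [hexpand, sum_add_distrib, sum_sub_distrib, ← mul_sum, hp]
  ring

theorem Finset.sum_mul_sq_sub_sq_sum_mul_nonneg {p : ι → ℝ} (hp0 : ∀ i ∈ s, 0 ≤ p i)
    (hp : ∑ i ∈ s, p i = 1) (y : ι → ℝ) :
    0 ≤ ∑ i ∈ s, p i * y i ^ 2 - (∑ i ∈ s, p i * y i) ^ 2 := by
  rw [← sum_mul_sub_sum_mul_sq s hp]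
  exact sum_nonneg fun i hi => mul_nonneg (hp0 i hi) (sq_nonneg _)

theorem Finset.sum_mul_sq_sub_sq_sum_mul_le_one {p : ι → ℝ} (hp0 : ∀ i ∈ s, 0 ≤ p i)
    (hp : ∑ i ∈ s, p i = 1) {y : ι → ℝ} (hy0 : ∀ i ∈ s, 0 ≤ y i) (hy1 : ∀ i ∈ s, y i ≤ 1) :
    ∑ i ∈ s, p i * y i ^ 2 - (∑ i ∈ s, p i * y i) ^ 2 ≤ 1 := by
  have hsq : ∑ i ∈ s, p i * y i ^ 2 ≤ ∑ i ∈ s, p i := sum_le_sum fun i hi =>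
    mul_le_of_le_one_right (hp0 i hi) (pow_le_one₀ (hy0 i hi) (hy1 i hi))
  nlinarith [sq_nonneg (∑ i ∈ s, p i * y i)]

theorem Finset.abs_sum_mul_le_sqrt_mul_sqrt {p a : ι → ℝ} (hp0 : ∀ i ∈ s, 0 < p i)
    (hp : ∑ i ∈ s, p i = 1) (ha : ∑ i ∈ s, a i = 0) (y : ι → ℝ) :
    |∑ i ∈ s, a i * y i| ≤
      √(∑ i ∈ s, p i * y i ^ 2 - (∑ i ∈ s, p i * y i) ^ 2) * √(∑ i ∈ s, a i ^ 2 / p i) := by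
  set m := ∑ i ∈ s, p i * y i
  have hcentre : ∑ i ∈ s, a i * y i = ∑ i ∈ s, a i * (y i - m) := by
    simp only [mul_sub, sum_sub_distrib, ← sum_mul, ha, zero_mul, sub_zero]
  rw [hcentre, ← sqrt_sq_eq_abs, ← sqrt_mul (sum_mul_sq_sub_sq_sum_mul_nonneg s
    (fun i hi => (hp0 i hi).le) hp y), mul_comm, ← sum_mul_sub_sum_mul_sq s hp]
  exact sqrt_le_sqrt (sq_sum_mul_le_sum_sq_div_mul_sum_mul_sq s hp0 a _)

end WeightedSums

theorem sum_deriv_eq_zero_of_sum_eq_one {X : Type*} [Fintype X] {P : ℝ → X → ℝ} {γ : ℝ}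
    (hdiff : ∀ x, DifferentiableAt ℝ (fun t => P t x) γ)
    (hsum : (fun t => ∑ x, P t x) =ᶠ[nhds γ] fun _ => 1) :
    ∑ x, deriv (fun t => P t x) γ = 0 := by
  rw [← deriv_fun_sum fun x _ => hdiff x, hsum.deriv_eq, deriv_const]

theorem stmt1_general {X : Type*} [Fintype X]
    (I : Set ℝ) (hIopen : IsOpen I)
    (P : ℝ → X → ℝ)
    (hpos : ∀ γ ∈ I, ∀ x : X, 0 < P γ x)
    (hsum : ∀ γ ∈ I, ∑ x : X, P γ x = 1)
    (hdiff : ∀ x : X, ∀ γ ∈ I, DifferentiableAt ℝ (fun t => P t x) γ)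
    (yhat : X → ℝ) (hy0 : ∀ x, 0 ≤ yhat x) (hy1 : ∀ x, yhat x ≤ 1)
    (γ : ℝ) (hγ : γ ∈ I) :
    |deriv (fun t => ∑ x : X, P t x * yhat x) γ| ≤
      Real.sqrt ((∑ x : X, P γ x * (yhat x) ^ 2) - (∑ x : X, P γ x * yhat x) ^ 2) *
        Real.sqrt (∑ x : X, (deriv (fun t => P t x) γ) ^ 2 / P γ x) ∧
    Real.sqrt ((∑ x : X, P γ x * (yhat x) ^ 2) - (∑ x : X, P γ x * yhat x) ^ 2) *
        Real.sqrt (∑ x : X, (deriv (fun t => P t x) γ) ^ 2 / P γ x) ≤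
      Real.sqrt (∑ x : X, (deriv (fun t => P t x) γ) ^ 2 / P γ x) := by
  have hdiffγ : ∀ x, DifferentiableAt ℝ (fun t => P t x) γ := fun x => hdiff x γ hγ
  have hmean : deriv (fun t => ∑ x, P t x * yhat x) γ =
      ∑ x, deriv (fun t => P t x) γ * yhat x := by
    rw [deriv_fun_sum fun x _ => (hdiffγ x).mul_const _]
    simp only [deriv_mul_const_field]
  have hscore : ∑ x, deriv (fun t => P t x) γ = 0 :=
    sum_deriv_eq_zero_of_sum_eq_one hdiffγ <|
      Filter.eventually_of_mem (hIopen.mem_nhds hγ) hsum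
  have hvar_le_one := sum_mul_sq_sub_sq_sum_mul_le_one univ (fun x _ => (hpos γ hγ x).le)
    (hsum γ hγ) (fun x _ => hy0 x) fun x _ => hy1 x
  refine ⟨hmean ▸ abs_sum_mul_le_sqrt_mul_sqrt univ (fun x _ => hpos γ hγ x) (hsum γ hγ)
    hscore yhat, ?_⟩
  exact mul_le_of_le_one_left (sqrt_nonneg _) (sqrt_le_one.mpr hvar_le_one)

/-- the classification indicator `I₁` is a lower bound to `σ·√F ≤ √F`. -/
theorem stmt1 {X : Type*} [Fintype X] [Nonempty X]
    (I : Set ℝ) (hIopen : IsOpen I) (hIconn : I.OrdConnected)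
    (P : ℝ → X → ℝ)
    (hpos : ∀ γ ∈ I, ∀ x : X, 0 < P γ x)
    (hsum : ∀ γ ∈ I, ∑ x : X, P γ x = 1)
    (hdiff : ∀ x : X, ∀ γ ∈ I, DifferentiableAt ℝ (fun t => P t x) γ)
    (yhat : X → ℝ) (hy0 : ∀ x, 0 ≤ yhat x) (hy1 : ∀ x, yhat x ≤ 1)
    (γ : ℝ) (hγ : γ ∈ I) :
    |deriv (fun t => ∑ x : X, P t x * yhat x) γ| ≤
      Real.sqrt ((∑ x : X, P γ x * (yhat x) ^ 2) - (∑ x : X, P γ x * yhat x) ^ 2) *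
        Real.sqrt (∑ x : X, (deriv (fun t => P t x) γ) ^ 2 / P γ x) ∧
    Real.sqrt ((∑ x : X, P γ x * (yhat x) ^ 2) - (∑ x : X, P γ x * yhat x) ^ 2) *
        Real.sqrt (∑ x : X, (deriv (fun t => P t x) γ) ^ 2 / P γ x) ≤
      Real.sqrt (∑ x : X, (deriv (fun t => P t x) γ) ^ 2 / P γ x) :=
  stmt1_general I hIopen P hpos hsum hdiff yhat hy0 hy1 γ hγ
end

section
/- (Invariance of f-divergences under a sufficient statistic.) Let 𝒳, 𝒴 be finite nonempty sets, S: 𝒳 → 𝒴 a surjective map, and p₁, p₂ probability distributions on 𝒳 admitting the Fisher–Neyman factorization p₁(x) = h(x) g₁(S(x)) and p₂(x) = h(x) g₂(S(x)) for all x ∈ 𝒳, with nonnegative functions h: 𝒳 → ℝ and g₁, g₂: 𝒴 → ℝ. Let p₁^S, p₂^S be the pushforward distributions on 𝒴, p_i^S(y) = Σ_{x: S(x)=y} p_i(x). Then D_f[p₁, p₂] = D_f[p₁^S, p₂^S] for every f-divergence D_f. -/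
open Finset Real

/-- invariance of f-divergences under a sufficient statistic
(Fisher–Neyman factorized family). -/
theorem stmt8 {X Y : Type*} [Fintype X] [Fintype Y] [Nonempty X] [Nonempty Y] [DecidableEq Y]
    (f : ℝ → ℝ) (hconv : ConvexOn ℝ (Set.Ici 0) f) (hf1 : f 1 = 0)
    (S : X → Y) (hS : Function.Surjective S)
    (h : X → ℝ) (g₁ g₂ : Y → ℝ)
    (hh : ∀ x, 0 ≤ h x) (hg₁ : ∀ y, 0 ≤ g₁ y) (hg₂ : ∀ y, 0 ≤ g₂ y)
    (p₁ p₂ : X → ℝ)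
    (hp₁ : ∀ x, 0 < p₁ x) (hp₁1 : ∑ x : X, p₁ x = 1)
    (hp₂ : ∀ x, 0 < p₂ x) (hp₂1 : ∑ x : X, p₂ x = 1)
    (hfac₁ : ∀ x, p₁ x = h x * g₁ (S x))
    (hfac₂ : ∀ x, p₂ x = h x * g₂ (S x)) :
    ∑ x : X, p₂ x * f (p₁ x / p₂ x)
      = ∑ y : Y, (∑ x ∈ Finset.univ.filter (fun x : X => S x = y), p₂ x) *
          f ((∑ x ∈ Finset.univ.filter (fun x : X => S x = y), p₁ x) /
             (∑ x ∈ Finset.univ.filter (fun x : X => S x = y), p₂ x)) := by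
  have hh' : ∀ x, 0 < h x := by
    intro x
    rcases (hh x).lt_or_eq with hx | hx
    · exact hx
    · exfalso; have := hp₁ x; rw [hfac₁ x, ← hx, zero_mul] at this; exact lt_irrefl 0 this
  have hg₂' : ∀ y, 0 < g₂ y := by
    intro y
    obtain ⟨x, rfl⟩ := hS y
    rcases (hg₂ (S x)).lt_or_eq with hx | hx
    · exact hx
    · exfalso; have := hp₂ x; rw [hfac₂ x, ← hx, mul_zero] at this; exact lt_irrefl 0 this
  have key : ∀ y : Y,
      (∑ x ∈ Finset.univ.filter (fun x : X => S x = y), p₁ x) /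
        (∑ x ∈ Finset.univ.filter (fun x : X => S x = y), p₂ x) = g₁ y / g₂ y := by
    intro y
    have h1 : (∑ x ∈ Finset.univ.filter (fun x : X => S x = y), p₁ x)
        = (∑ x ∈ Finset.univ.filter (fun x : X => S x = y), h x) * g₁ y := by
      rw [Finset.sum_mul]
      refine Finset.sum_congr rfl fun x hx => ?_
      have hxy : S x = y := (Finset.mem_filter.mp hx).2
      rw [hfac₁ x, hxy]
    have h2 : (∑ x ∈ Finset.univ.filter (fun x : X => S x = y), p₂ x)
        = (∑ x ∈ Finset.univ.filter (fun x : X => S x = y), h x) * g₂ y := by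
      rw [Finset.sum_mul]
      refine Finset.sum_congr rfl fun x hx => ?_
      have hxy : S x = y := (Finset.mem_filter.mp hx).2
      rw [hfac₂ x, hxy]
    obtain ⟨x₀, hx₀⟩ := hS y
    have hne : (Finset.univ.filter (fun x : X => S x = y)).Nonempty :=
      ⟨x₀, Finset.mem_filter.mpr ⟨Finset.mem_univ _, hx₀⟩⟩
    have hpos : 0 < ∑ x ∈ Finset.univ.filter (fun x : X => S x = y), h x :=
      Finset.sum_pos (fun x _ => hh' x) hne
    rw [h1, h2, mul_div_mul_left _ _ (ne_of_gt hpos)]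
  have ratio : ∀ x : X, p₁ x / p₂ x = g₁ (S x) / g₂ (S x) := by
    intro x
    rw [hfac₁ x, hfac₂ x, mul_div_mul_left _ _ (ne_of_gt (hh' x))]
  calc ∑ x : X, p₂ x * f (p₁ x / p₂ x)
      = ∑ y : Y, ∑ x ∈ Finset.univ.filter (fun x : X => S x = y),
          p₂ x * f (g₁ (S x) / g₂ (S x)) := by
        rw [Finset.sum_fiberwise]
        exact Finset.sum_congr rfl fun x _ => by rw [ratio x]
    _ = _ := by
        refine Finset.sum_congr rfl fun y _ => ?_
        rw [key y, Finset.sum_mul]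
        exact Finset.sum_congr rfl fun x hx => by rw [(Finset.mem_filter.mp hx).2]
end

section
/- (Relation between the Hessian of an f-divergence and the Fisher information.) Let f: ℝ_{≥0} → ℝ be convex, twice differentiable, with f(1) = 0 and f'(1) = 0, and let P(·|γ) be a family of probability distributions on 𝒳 such that each map γ ↦ P(x|γ) is twice differentiable. Then for every γ, the function φ ↦ D_f[P(·|γ), P(·|φ)] is twice differentiable at φ = γ and d²/dφ² D_f[P(·|γ), P(·|φ)] |_{φ=γ} = f''(1) · F(γ). -/
open Finset Real

/-!
Writing `u(φ) = P(x|γ) / P(x|φ)`, the summand `P(x|φ) f(u(φ))` has derivative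
`∂P(x|φ) · (f(u) - u f'(u))`, and `v ↦ f(v) - v f'(v)` has derivative `-v f''(v)`.
Differentiating once more at `φ = γ`, where `u = 1`, the term `∂²P(x|γ) (f(1) - f'(1))`
vanishes because `f(1) = f'(1) = 0`, and since `u'(γ) = -∂P(x|γ) / P(x|γ)` what remains is
`f''(1) (∂P(x|γ))² / P(x|γ)`.
-/

theorem hasDerivAt_mul_comp_const_div {f q : ℝ → ℝ} {q' c φ : ℝ} (hq : HasDerivAt q q' φ)
    (hq0 : q φ ≠ 0) (hf : DifferentiableAt ℝ f (c / q φ)) :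
    HasDerivAt (fun t => q t * f (c / q t))
      (q' * (f (c / q φ) - c / q φ * deriv f (c / q φ))) φ := by
  have hu : HasDerivAt (fun t => c / q t) ((0 * q φ - c * q') / q φ ^ 2) φ :=
    (hasDerivAt_const φ c).div hq hq0
  refine (hq.mul (hf.hasDerivAt.comp φ hu)).congr_deriv ?_
  simp only [Function.comp_apply]
  field_simp
  ring

theorem hasDerivAt_sub_mul_deriv {f : ℝ → ℝ} {v : ℝ} (hf : DifferentiableAt ℝ f v)
    (hf' : DifferentiableAt ℝ (deriv f) v) :
    HasDerivAt (fun w => f w - w * deriv f w) (-(v * deriv (deriv f) v)) v :=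
  (hf.hasDerivAt.sub ((hasDerivAt_id' v).mul hf'.hasDerivAt)).congr_deriv (by ring)

theorem hasDerivAt_deriv_mul_comp_div_self {f q : ℝ → ℝ} {γ : ℝ}
    (hq : DifferentiableAt ℝ q γ) (hq' : DifferentiableAt ℝ (deriv q) γ) (hq0 : q γ ≠ 0)
    (hf : DifferentiableAt ℝ f 1) (hf' : DifferentiableAt ℝ (deriv f) 1) :
    HasDerivAt (fun t => deriv q t * (f (q γ / q t) - q γ / q t * deriv f (q γ / q t)))
      (deriv (deriv q) γ * (f 1 - deriv f 1) + deriv (deriv f) 1 * deriv q γ ^ 2 / q γ) γ := by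
  have hself : q γ / q γ = 1 := div_self hq0
  have hu : HasDerivAt (fun t => q γ / q t) ((0 * q γ - q γ * deriv q γ) / q γ ^ 2) γ :=
    (hasDerivAt_const γ (q γ)).div hq.hasDerivAt hq0
  have hg := hasDerivAt_sub_mul_deriv hf hf'
  rw [← hself] at hg
  refine (hq'.hasDerivAt.mul (hg.comp γ hu)).congr_deriv ?_
  simp only [Function.comp_apply, hself]
  field_simp
  ring

theorem stmt10_general {X : Type*} [Fintype X]
    (I : Set ℝ) (hIopen : IsOpen I)
    (P : ℝ → X → ℝ)
    (hpos : ∀ γ ∈ I, ∀ x : X, 0 < P γ x)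
    (hd1 : ∀ x : X, ∀ γ ∈ I, DifferentiableAt ℝ (fun t => P t x) γ)
    (hd2 : ∀ x : X, ∀ γ ∈ I, DifferentiableAt ℝ (deriv (fun t => P t x)) γ)
    (f : ℝ → ℝ)
    (hf1 : f 1 = 0) (hf'1 : deriv f 1 = 0)
    (hfd1 : ∀ t : ℝ, 0 < t → DifferentiableAt ℝ f t)
    (hfd2 : ∀ t : ℝ, 0 < t → DifferentiableAt ℝ (deriv f) t)
    (γ : ℝ) (hγ : γ ∈ I) :
    DifferentiableAt ℝ (deriv (fun φ => ∑ x : X, P φ x * f (P γ x / P φ x))) γ ∧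
    deriv (deriv (fun φ => ∑ x : X, P φ x * f (P γ x / P φ x))) γ
      = deriv (deriv f) 1 * (∑ x : X, (deriv (fun t => P t x) γ) ^ 2 / P γ x) := by
  set u : X → ℝ → ℝ := fun x φ => P γ x / P φ x
  have hfirst : deriv (fun φ => ∑ x : X, P φ x * f (u x φ)) =ᶠ[nhds γ]
      fun φ => ∑ x : X, deriv (fun t => P t x) φ * (f (u x φ) - u x φ * deriv f (u x φ)) := by
    filter_upwards [hIopen.mem_nhds hγ] with φ hφ
    exact (HasDerivAt.fun_sum fun x _ => hasDerivAt_mul_comp_const_div (hd1 x φ hφ).hasDerivAt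
      (hpos φ hφ x).ne' (hfd1 _ (div_pos (hpos γ hγ x) (hpos φ hφ x)))).deriv
  have hsecond := HasDerivAt.fun_sum (u := Finset.univ) fun x _ =>
    hasDerivAt_deriv_mul_comp_div_self (f := f) (hd1 x γ hγ) (hd2 x γ hγ) (hpos γ hγ x).ne'
      (hfd1 1 one_pos) (hfd2 1 one_pos)
  simp only [hf1, hf'1, sub_zero, mul_zero, zero_add] at hsecond
  have hD := hsecond.congr_of_eventuallyEq hfirst
  refine ⟨hD.differentiableAt, ?_⟩
  rw [hD.deriv, Finset.mul_sum]
  simp only [mul_div_assoc]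

/-- the Hessian (second derivative) of an f-divergence along the family
equals `f''(1)·F(γ)`. -/
theorem stmt10 {X : Type*} [Fintype X] [Nonempty X]
    (I : Set ℝ) (hIopen : IsOpen I) (hIconn : I.OrdConnected)
    (P : ℝ → X → ℝ)
    (hpos : ∀ γ ∈ I, ∀ x : X, 0 < P γ x)
    (hsum : ∀ γ ∈ I, ∑ x : X, P γ x = 1)
    (hd1 : ∀ x : X, ∀ γ ∈ I, DifferentiableAt ℝ (fun t => P t x) γ)
    (hd2 : ∀ x : X, ∀ γ ∈ I, DifferentiableAt ℝ (deriv (fun t => P t x)) γ)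
    (f : ℝ → ℝ) (hconv : ConvexOn ℝ (Set.Ici 0) f)
    (hf1 : f 1 = 0) (hf'1 : deriv f 1 = 0)
    (hfd1 : ∀ t : ℝ, 0 < t → DifferentiableAt ℝ f t)
    (hfd2 : ∀ t : ℝ, 0 < t → DifferentiableAt ℝ (deriv f) t)
    (γ : ℝ) (hγ : γ ∈ I) :
    DifferentiableAt ℝ (deriv (fun φ => ∑ x : X, P φ x * f (P γ x / P φ x))) γ ∧
    deriv (deriv (fun φ => ∑ x : X, P φ x * f (P γ x / P φ x))) γ
      = deriv (deriv f) 1 * (∑ x : X, (deriv (fun t => P t x) γ) ^ 2 / P γ x) :=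
  stmt10_general I hIopen P hpos hd1 hd2 f hf1 hf'1 hfd1 hfd2 γ hγ
end

section
/- (Monotonicity of the Fisher information under stochastic maps.) Let 𝒳, 𝒴 be finite nonempty sets and W: 𝒴 × 𝒳 → ℝ a left-stochastic transition matrix (W(y|x) ≥ 0, Σ_{y∈𝒴} W(y|x) = 1 for every x), such that for every y ∈ 𝒴 there is some x with W(y|x) > 0. Let P(·|γ) be a differentiable family of probability distributions on 𝒳 and define the pushed-forward family P'(y|γ) = Σ_{x∈𝒳} W(y|x) P(x|γ) on 𝒴. Then the Fisher information of the pushed-forward family is bounded by that of the original family: F_{P'}(γ) ≤ F_P(γ) for every γ. -/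
open Finset Real

/-!
The derivative of the pushed-forward family is the pushed-forward derivative, so the claim
is an inequality between finite sums. For each output `y`, the Cauchy–Schwarz inequality with
weights `W y x` bounds the `y`-th term of `F_{P'}` by `∑ₓ W y x · (∂P x)² / P x`; summing over
`y` and using that the columns of `W` sum to one gives `F_P`.
-/

namespace Finset

variable {ι κ R : Type*} [Field R] [LinearOrder R] [IsStrictOrderedRing R]

theorem sq_sum_mul_div_sum_mul_le (s : Finset ι) {w p : ι → R} (d : ι → R)
    (hw : ∀ i ∈ s, 0 ≤ w i) (hp : ∀ i ∈ s, 0 < p i) :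
    (∑ i ∈ s, w i * d i) ^ 2 / ∑ i ∈ s, w i * p i ≤ ∑ i ∈ s, w i * (d i ^ 2 / p i) := by
  have hwp : ∀ i ∈ s, 0 ≤ w i * p i := fun i hi => mul_nonneg (hw i hi) (hp i hi).le
  have hwdp : ∀ i ∈ s, 0 ≤ w i * (d i ^ 2 / p i) :=
    fun i hi => mul_nonneg (hw i hi) (div_nonneg (sq_nonneg _) (hp i hi).le)
  refine div_le_of_le_mul₀ (sum_nonneg hwp) (sum_nonneg hwdp)
    (sum_sq_le_sum_mul_sum_of_sq_le_mul s hwdp hwp fun i hi => le_of_eq ?_)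
  field_simp [(hp i hi).ne']

theorem sum_sq_sum_mul_div_sum_mul_le [Fintype ι] [Fintype κ] {W : κ → ι → R} {p : ι → R}
    (d : ι → R) (hW0 : ∀ y x, 0 ≤ W y x) (hW1 : ∀ x, ∑ y, W y x = 1) (hp : ∀ x, 0 < p x) :
    ∑ y, (∑ x, W y x * d x) ^ 2 / ∑ x, W y x * p x ≤ ∑ x, d x ^ 2 / p x :=
  calc ∑ y, (∑ x, W y x * d x) ^ 2 / ∑ x, W y x * p x
      ≤ ∑ y, ∑ x, W y x * (d x ^ 2 / p x) :=
        sum_le_sum fun y _ =>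
          sq_sum_mul_div_sum_mul_le _ d (fun x _ => hW0 y x) fun x _ => hp x
    _ = ∑ x, (∑ y, W y x) * (d x ^ 2 / p x) := by
        rw [sum_comm]
        simp only [sum_mul]
    _ = ∑ x, d x ^ 2 / p x := by simp only [hW1, one_mul]

end Finset

theorem stmt11_general {X Y : Type*} [Fintype X] [Fintype Y]
    (I : Set ℝ)
    (P : ℝ → X → ℝ)
    (hpos : ∀ γ ∈ I, ∀ x : X, 0 < P γ x)
    (hdiff : ∀ x : X, ∀ γ ∈ I, DifferentiableAt ℝ (fun t => P t x) γ)
    (W : Y → X → ℝ)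
    (hW0 : ∀ y x, 0 ≤ W y x) (hW1 : ∀ x, ∑ y : Y, W y x = 1)
    (γ : ℝ) (hγ : γ ∈ I) :
    ∑ y : Y, (deriv (fun t => ∑ x : X, W y x * P t x) γ) ^ 2 / (∑ x : X, W y x * P γ x)
      ≤ ∑ x : X, (deriv (fun t => P t x) γ) ^ 2 / P γ x := by
  have hderiv : ∀ y, deriv (fun t => ∑ x : X, W y x * P t x) γ
      = ∑ x : X, W y x * deriv (fun t => P t x) γ := fun y => by
    rw [deriv_fun_sum fun x _ => (hdiff x γ hγ).const_mul (W y x)]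
    exact sum_congr rfl fun x _ => deriv_const_mul (W y x) (hdiff x γ hγ)
  simp only [hderiv]
  exact sum_sq_sum_mul_div_sum_mul_le _ hW0 hW1 (hpos γ hγ)

/-- monotonicity of the Fisher information under stochastic maps. -/
theorem stmt11 {X Y : Type*} [Fintype X] [Fintype Y] [Nonempty X] [Nonempty Y]
    (I : Set ℝ) (hIopen : IsOpen I) (hIconn : I.OrdConnected)
    (P : ℝ → X → ℝ)
    (hpos : ∀ γ ∈ I, ∀ x : X, 0 < P γ x)
    (hsum : ∀ γ ∈ I, ∑ x : X, P γ x = 1)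
    (hdiff : ∀ x : X, ∀ γ ∈ I, DifferentiableAt ℝ (fun t => P t x) γ)
    (W : Y → X → ℝ)
    (hW0 : ∀ y x, 0 ≤ W y x) (hW1 : ∀ x, ∑ y : Y, W y x = 1)
    (hWpos : ∀ y : Y, ∃ x : X, 0 < W y x)
    (γ : ℝ) (hγ : γ ∈ I) :
    ∑ y : Y, (deriv (fun t => ∑ x : X, W y x * P t x) γ) ^ 2 / (∑ x : X, W y x * P γ x)
      ≤ ∑ x : X, (deriv (fun t => P t x) γ) ^ 2 / P γ x :=
  stmt11_general I P hpos hdiff W hW0 hW1 γ hγ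
end

section
/- (Multidimensional bound for the classification indicator.) Let P(·|γ) be a family of probability distributions on 𝒳 indexed by γ in an open subset of ℝ^d, differentiable in each coordinate γ_i. Let K ≥ 1 and let Q: {1,…,K} × 𝒳 → [0,1] satisfy Σ_{y=1}^K Q(y|x) = 1 for every x. Define Q(y|γ) = Σ_{x∈𝒳} P(x|γ) Q(y|x) and σ_y(γ) = √(Σ_{x∈𝒳} P(x|γ) Q(y|x)² − Q(y|γ)²). Then the indicator I₁(γ) = (1/K) Σ_{y=1}^K √(Σ_{i=1}^d (∂Q(y|γ)/∂γ_i)²) satisfies I₁(γ) ≤ (1/K) Σ_{y=1}^K σ_y(γ) √(tr F(γ)) ≤ √(tr F(γ)). -/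
open Finset Real Filter Topology

/-
For each coordinate `i` the score `∂ᵢP(x|γ)` has mean zero (differentiate `∑ₓ P(x|γ) = 1`), so
`∂ᵢQ(y|γ) = ∑ₓ ∂ᵢP(x|γ) (Q(y|x) - Q(y|γ))`. Cauchy–Schwarz with the weights `P(x|γ)` bounds its
square by `σ_y² · ∑ₓ (∂ᵢP)²/P`; summing over `i` gives the first inequality, and `σ_y ≤ 1`
because `0 ≤ Q ≤ 1` gives the second.
-/

section Variance

def Finset.weightedVariance {ι : Type*} (s : Finset ι) (p q : ι → ℝ) : ℝ :=
  ∑ x ∈ s, p x * q x ^ 2 - (∑ x ∈ s, p x * q x) ^ 2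

variable {ι : Type*} (s : Finset ι) {p : ι → ℝ}

theorem Finset.sq_sum_mul_le_sum_mul_sq_mul_sum_sq_div (hp : ∀ x ∈ s, 0 < p x) (a b : ι → ℝ) :
    (∑ x ∈ s, a x * b x) ^ 2 ≤ (∑ x ∈ s, p x * b x ^ 2) * ∑ x ∈ s, a x ^ 2 / p x :=
  sum_sq_le_sum_mul_sum_of_sq_le_mul s
    (fun x hx => mul_nonneg (hp x hx).le (sq_nonneg _))
    (fun x hx => div_nonneg (sq_nonneg _) (hp x hx).le)
    fun x hx => le_of_eq (by field_simp [(hp x hx).ne'])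

theorem Finset.weightedVariance_eq_sum_mul_sq_sub (hp1 : ∑ x ∈ s, p x = 1) (q : ι → ℝ) :
    s.weightedVariance p q = ∑ x ∈ s, p x * (q x - ∑ z ∈ s, p z * q z) ^ 2 := by
  unfold weightedVariance
  set m := ∑ z ∈ s, p z * q z
  have expand : ∀ x, p x * (q x - m) ^ 2 = p x * q x ^ 2 - 2 * m * (p x * q x) + m ^ 2 * p x :=
    fun x => by ring
  simp only [expand, sum_add_distrib, sum_sub_distrib, ← mul_sum, hp1]
  ring

theorem Finset.weightedVariance_nonneg (hp : ∀ x ∈ s, 0 ≤ p x) (hp1 : ∑ x ∈ s, p x = 1)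
    (q : ι → ℝ) : 0 ≤ s.weightedVariance p q := by
  rw [weightedVariance_eq_sum_mul_sq_sub s hp1]
  exact sum_nonneg fun x hx => mul_nonneg (hp x hx) (sq_nonneg _)

theorem Finset.weightedVariance_le_one (hp : ∀ x ∈ s, 0 ≤ p x) (hp1 : ∑ x ∈ s, p x = 1)
    {q : ι → ℝ} (hq0 : ∀ x, 0 ≤ q x) (hq1 : ∀ x, q x ≤ 1) : s.weightedVariance p q ≤ 1 := by
  unfold weightedVariance
  have hsecond : ∑ x ∈ s, p x * q x ^ 2 ≤ ∑ x ∈ s, p x :=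
    sum_le_sum fun x hx => mul_le_of_le_one_right (hp x hx) (pow_le_one₀ (hq0 x) (hq1 x))
  nlinarith [sq_nonneg (∑ x ∈ s, p x * q x)]

/-- Centring `q` at its `p`-mean does not change its pairing with the mean-zero `a`. -/
theorem Finset.sq_sum_mul_le_weightedVariance_mul (hp : ∀ x ∈ s, 0 < p x)
    (hp1 : ∑ x ∈ s, p x = 1) {a : ι → ℝ} (ha : ∑ x ∈ s, a x = 0) (q : ι → ℝ) :
    (∑ x ∈ s, a x * q x) ^ 2 ≤ s.weightedVariance p q * ∑ x ∈ s, a x ^ 2 / p x := by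
  set m := ∑ z ∈ s, p z * q z
  have hcentre : ∑ x ∈ s, a x * q x = ∑ x ∈ s, a x * (q x - m) := by
    simp only [mul_sub, sum_sub_distrib, ← sum_mul, ha, zero_mul, sub_zero]
  rw [hcentre, weightedVariance_eq_sum_mul_sq_sub s hp1]
  exact sq_sum_mul_le_sum_mul_sq_mul_sum_sq_div s hp a _

end Variance

theorem sqrt_sum_sq_sum_mul_le_sqrt_weightedVariance_mul_sqrt {ι X : Type*} [Fintype ι]
    [Fintype X] {p : X → ℝ} (hp : ∀ x, 0 < p x) (hp1 : ∑ x, p x = 1) {a : ι → X → ℝ}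
    (ha : ∀ i, ∑ x, a i x = 0) (q : X → ℝ) :
    √(∑ i, (∑ x, a i x * q x) ^ 2)
      ≤ √(univ.weightedVariance p q) * √(∑ i, ∑ x, a i x ^ 2 / p x) := by
  rw [← sqrt_mul (weightedVariance_nonneg _ (fun x _ => (hp x).le) hp1 q), mul_sum]
  exact sqrt_le_sqrt <| sum_le_sum fun i _ =>
    sq_sum_mul_le_weightedVariance_mul _ (fun x _ => hp x) hp1 (ha i) q

theorem one_div_mul_sum_le {K : ℕ} {a : Fin K → ℝ} {b : ℝ} (hb : 0 ≤ b) (ha : ∀ y, a y ≤ b) :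
    1 / (K : ℝ) * ∑ y, a y ≤ b := by
  rcases K.eq_zero_or_pos with rfl | hK
  · simpa using hb
  calc 1 / (K : ℝ) * ∑ y, a y ≤ 1 / (K : ℝ) * ∑ _y : Fin K, b := by gcongr with y; exact ha y
    _ = b := by simp [field]

section Calculus

theorem Function.eventually_update_mem {ι : Type*} [DecidableEq ι] {A : ι → Type*}
    [∀ i, TopologicalSpace (A i)] {U : Set (∀ i, A i)} (hU : IsOpen U) {γ : ∀ i, A i}
    (hγ : γ ∈ U) (i : ι) : ∀ᶠ s in 𝓝 (γ i), Function.update γ i s ∈ U :=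
  (continuous_const.update i continuous_id).continuousAt.preimage_mem_nhds
    (by simpa using hU.mem_nhds hγ)

variable {X : Type*} [Fintype X] {f : X → ℝ → ℝ} {t : ℝ}

theorem sum_deriv_eq_zero_of_eventually_sum_eq (hf : ∀ x, DifferentiableAt ℝ (f x) t) {c : ℝ}
    (hc : (fun s => ∑ x, f x s) =ᶠ[𝓝 t] fun _ => c) : ∑ x, deriv (f x) t = 0 := by
  rw [← deriv_fun_sum fun x _ => hf x, hc.deriv_eq, deriv_const]

theorem deriv_sum_mul_const (hf : ∀ x, DifferentiableAt ℝ (f x) t) (c : X → ℝ) :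
    deriv (fun s => ∑ x, f x s * c x) t = ∑ x, deriv (f x) t * c x := by
  rw [deriv_fun_sum fun x _ => (hf x).mul_const (c x)]
  exact sum_congr rfl fun x _ => deriv_mul_const (hf x) (c x)

end Calculus

theorem stmt12_general {X : Type*} [Fintype X] {d : ℕ}
    (U : Set (Fin d → ℝ)) (hU : IsOpen U)
    (P : (Fin d → ℝ) → X → ℝ)
    (hpos : ∀ γ ∈ U, ∀ x : X, 0 < P γ x)
    (hsum : ∀ γ ∈ U, ∑ x : X, P γ x = 1)
    (hdiff : ∀ x : X, ∀ i : Fin d, ∀ γ ∈ U,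
      DifferentiableAt ℝ (fun t : ℝ => P (Function.update γ i t) x) (γ i))
    (K : ℕ)
    (Q : Fin K → X → ℝ)
    (hQ0 : ∀ y x, 0 ≤ Q y x) (hQle : ∀ y x, Q y x ≤ 1)
    (γ : Fin d → ℝ) (hγ : γ ∈ U) :
    (1 / (K : ℝ)) * ∑ y : Fin K,
        Real.sqrt (∑ i : Fin d,
          (deriv (fun s : ℝ => ∑ x : X, P (Function.update γ i s) x * Q y x) (γ i)) ^ 2)
      ≤ (1 / (K : ℝ)) * ∑ y : Fin K,
          Real.sqrt ((∑ x : X, P γ x * (Q y x) ^ 2) - (∑ x : X, P γ x * Q y x) ^ 2) *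
            Real.sqrt (∑ i : Fin d, ∑ x : X,
              (deriv (fun s : ℝ => P (Function.update γ i s) x) (γ i)) ^ 2 / P γ x) ∧
    (1 / (K : ℝ)) * ∑ y : Fin K,
        Real.sqrt ((∑ x : X, P γ x * (Q y x) ^ 2) - (∑ x : X, P γ x * Q y x) ^ 2) *
          Real.sqrt (∑ i : Fin d, ∑ x : X,
            (deriv (fun s : ℝ => P (Function.update γ i s) x) (γ i)) ^ 2 / P γ x)
      ≤ Real.sqrt (∑ i : Fin d, ∑ x : X,
          (deriv (fun s : ℝ => P (Function.update γ i s) x) (γ i)) ^ 2 / P γ x) := by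
  have hscore : ∀ i, ∑ x, deriv (fun s => P (Function.update γ i s) x) (γ i) = 0 := fun i =>
    sum_deriv_eq_zero_of_eventually_sum_eq (fun x => hdiff x i γ hγ) <| by
      filter_upwards [Function.eventually_update_mem hU hγ i] with s hs using hsum _ hs
  simp only [deriv_sum_mul_const (fun x => hdiff x _ γ hγ)]
  constructor
  · gcongr with y
    exact sqrt_sum_sq_sum_mul_le_sqrt_weightedVariance_mul_sqrt (hpos γ hγ) (hsum γ hγ) hscore
      (Q y)
  · refine one_div_mul_sum_le (sqrt_nonneg _) fun y => mul_le_of_le_one_left (sqrt_nonneg _) ?_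
    exact sqrt_le_one.mpr <| weightedVariance_le_one _ (fun x _ => (hpos γ hγ x).le)
      (hsum γ hγ) (hQ0 y) (hQle y)

/-- multidimensional bound for the classification indicator. -/
theorem stmt12 {X : Type*} [Fintype X] [Nonempty X] {d : ℕ}
    (U : Set (Fin d → ℝ)) (hU : IsOpen U)
    (P : (Fin d → ℝ) → X → ℝ)
    (hpos : ∀ γ ∈ U, ∀ x : X, 0 < P γ x)
    (hsum : ∀ γ ∈ U, ∑ x : X, P γ x = 1)
    (hdiff : ∀ x : X, ∀ i : Fin d, ∀ γ ∈ U,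
      DifferentiableAt ℝ (fun t : ℝ => P (Function.update γ i t) x) (γ i))
    (K : ℕ) (hK : 1 ≤ K)
    (Q : Fin K → X → ℝ)
    (hQ0 : ∀ y x, 0 ≤ Q y x) (hQle : ∀ y x, Q y x ≤ 1)
    (hQsum : ∀ x : X, ∑ y : Fin K, Q y x = 1)
    (γ : Fin d → ℝ) (hγ : γ ∈ U) :
    (1 / (K : ℝ)) * ∑ y : Fin K,
        Real.sqrt (∑ i : Fin d,
          (deriv (fun s : ℝ => ∑ x : X, P (Function.update γ i s) x * Q y x) (γ i)) ^ 2)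
      ≤ (1 / (K : ℝ)) * ∑ y : Fin K,
          Real.sqrt ((∑ x : X, P γ x * (Q y x) ^ 2) - (∑ x : X, P γ x * Q y x) ^ 2) *
            Real.sqrt (∑ i : Fin d, ∑ x : X,
              (deriv (fun s : ℝ => P (Function.update γ i s) x) (γ i)) ^ 2 / P γ x) ∧
    (1 / (K : ℝ)) * ∑ y : Fin K,
        Real.sqrt ((∑ x : X, P γ x * (Q y x) ^ 2) - (∑ x : X, P γ x * Q y x) ^ 2) *
          Real.sqrt (∑ i : Fin d, ∑ x : X,
            (deriv (fun s : ℝ => P (Function.update γ i s) x) (γ i)) ^ 2 / P γ x)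
      ≤ Real.sqrt (∑ i : Fin d, ∑ x : X,
          (deriv (fun s : ℝ => P (Function.update γ i s) x) (γ i)) ^ 2 / P γ x) :=
  stmt12_general U hU P hpos hsum hdiff K Q hQ0 hQle γ hγ
end

section
/- (Optimal cross-entropy loss equals ln 2 minus the Jensen–Shannon divergence.) Let p₀ and p₁ be probability distributions on 𝒳. For a classifier ŷ: 𝒳 → (0,1), define the binary cross-entropy loss L(ŷ) = −½ Σ_{x∈𝒳} p₀(x) ln(1 − ŷ(x)) − ½ Σ_{x∈𝒳} p₁(x) ln ŷ(x). Then for every classifier ŷ one has L(ŷ) ≥ ln 2 − JS[p₀, p₁], and the Bayes-optimal classifier ŷ^opt(x) = p₁(x) / (p₀(x) + p₁(x)) achieves equality: L(ŷ^opt) = ln 2 − JS[p₀, p₁]. -/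
open Finset Real

/-- Binary cross-entropy loss of a classifier `yhat` for distributions `p₀` (label 0)
and `p₁` (label 1). -/
noncomputable def bceLoss {X : Type*} [Fintype X] (p₀ p₁ yhat : X → ℝ) : ℝ :=
  -(1 / 2) * (∑ x : X, p₀ x * Real.log (1 - yhat x))
    - (1 / 2) * (∑ x : X, p₁ x * Real.log (yhat x))

/-- Kullback–Leibler divergence on a finite set. -/
noncomputable def klDiv {X : Type*} [Fintype X] (p q : X → ℝ) : ℝ :=
  ∑ x : X, p x * Real.log (p x / q x)

/-- Jensen–Shannon divergence on a finite set. -/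
noncomputable def jsDiv {X : Type*} [Fintype X] (p q : X → ℝ) : ℝ :=
  (1 / 2) * klDiv p (fun x => (p x + q x) / 2) + (1 / 2) * klDiv q (fun x => (p x + q x) / 2)

/-!
Writing `s = p₀ + p₁`, the Jensen–Shannon
divergence equals `ln 2 + ½ (KL[p₀, s] + KL[p₁, s])`, which is `ln 2` minus the loss of the
Bayes classifier `p₁ / s`. Minimality of that loss is the two-point Gibbs inequality
`a ln (1 - y) + b ln y ≤ a ln (a / (a + b)) + b ln (b / (a + b))`, obtained by applying
`ln t ≤ t - 1` to each of the two terms.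
-/

lemma Real.mul_log_div_le_sub {a b : ℝ} (ha : 0 < a) (hb : 0 < b) :
    a * log (b / a) ≤ b - a :=
  calc a * log (b / a) ≤ a * (b / a - 1) := by gcongr; exact log_le_sub_one_of_pos (by positivity)
    _ = b - a := by field_simp

lemma Real.mul_log_one_sub_add_mul_log_le {a b y : ℝ} (ha : 0 < a) (hb : 0 < b)
    (hy₀ : 0 < y) (hy₁ : y < 1) :
    a * log (1 - y) + b * log y ≤ a * log (a / (a + b)) + b * log (b / (a + b)) := by
  have hab : 0 < a + b := add_pos ha hb
  have h₀ := mul_log_div_le_sub ha (show 0 < (a + b) * (1 - y) by nlinarith)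
  have h₁ := mul_log_div_le_sub hb (show 0 < (a + b) * y by positivity)
  have e₀ : (a + b) * (1 - y) / a = (1 - y) / (a / (a + b)) := by field_simp
  have e₁ : (a + b) * y / b = y / (b / (a + b)) := by field_simp
  rw [e₀, log_div (by linarith) (by positivity)] at h₀
  rw [e₁, log_div hy₀.ne' (by positivity)] at h₁
  linarith

section Finite

variable {X : Type*} [Fintype X]

lemma klDiv_div_const (p q : X → ℝ) {c : ℝ} (hq : ∀ x, q x ≠ 0) (hc : c ≠ 0) :
    klDiv p (fun x => q x / c) = klDiv p q + log c * ∑ x, p x := by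
  rw [klDiv, klDiv, mul_sum, ← sum_add_distrib]
  refine sum_congr rfl fun x _ => ?_
  rcases eq_or_ne (p x) 0 with hp | hp
  · simp [hp]
  · rw [div_div_eq_mul_div, mul_div_right_comm, log_mul (div_ne_zero hp (hq x)) hc]
    ring

lemma jsDiv_eq_log_two_add {p q : X → ℝ} (hs : ∀ x, p x + q x ≠ 0)
    (hp₁ : ∑ x, p x = 1) (hq₁ : ∑ x, q x = 1) :
    jsDiv p q =
      log 2 + (klDiv p (fun x => p x + q x) + klDiv q (fun x => p x + q x)) / 2 := by
  rw [jsDiv, klDiv_div_const p _ hs two_ne_zero, klDiv_div_const q _ hs two_ne_zero, hp₁, hq₁]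
  ring

noncomputable def bayesClassifier (p₀ p₁ : X → ℝ) : X → ℝ :=
  fun x => p₁ x / (p₀ x + p₁ x)

lemma bceLoss_bayesClassifier {p₀ p₁ : X → ℝ} (hs : ∀ x, p₀ x + p₁ x ≠ 0) :
    bceLoss p₀ p₁ (bayesClassifier p₀ p₁) =
      -(klDiv p₀ (fun x => p₀ x + p₁ x) + klDiv p₁ (fun x => p₀ x + p₁ x)) / 2 := by
  have h_one_sub : ∀ x, 1 - bayesClassifier p₀ p₁ x = p₀ x / (p₀ x + p₁ x) := fun x => by
    rw [bayesClassifier, eq_div_iff (hs x), sub_mul, div_mul_cancel₀ _ (hs x)]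
    ring
  rw [bceLoss]
  simp only [h_one_sub]
  simp only [klDiv, bayesClassifier]
  ring

lemma bceLoss_bayesClassifier_le {p₀ p₁ yhat : X → ℝ} (h₀ : ∀ x, 0 < p₀ x)
    (h₁ : ∀ x, 0 < p₁ x) (hy₀ : ∀ x, 0 < yhat x) (hy₁ : ∀ x, yhat x < 1) :
    bceLoss p₀ p₁ (bayesClassifier p₀ p₁) ≤ bceLoss p₀ p₁ yhat := by
  rw [bceLoss_bayesClassifier fun x => (add_pos (h₀ x) (h₁ x)).ne', bceLoss, klDiv, klDiv]
  have := sum_le_sum fun x (_ : x ∈ univ) =>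
    mul_log_one_sub_add_mul_log_le (h₀ x) (h₁ x) (hy₀ x) (hy₁ x)
  rw [sum_add_distrib, sum_add_distrib] at this
  linarith

end Finite

theorem stmt14_general {X : Type*} [Fintype X]
    (p₀ p₁ : X → ℝ)
    (h₀ : ∀ x, 0 < p₀ x) (h₀1 : ∑ x : X, p₀ x = 1)
    (h₁ : ∀ x, 0 < p₁ x) (h₁1 : ∑ x : X, p₁ x = 1) :
    (∀ yhat : X → ℝ, (∀ x, 0 < yhat x) → (∀ x, yhat x < 1) →
      Real.log 2 - jsDiv p₀ p₁ ≤ bceLoss p₀ p₁ yhat) ∧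
    bceLoss p₀ p₁ (fun x => p₁ x / (p₀ x + p₁ x)) = Real.log 2 - jsDiv p₀ p₁ := by
  have hs : ∀ x, p₀ x + p₁ x ≠ 0 := fun x => (add_pos (h₀ x) (h₁ x)).ne'
  have h_opt : bceLoss p₀ p₁ (bayesClassifier p₀ p₁) = log 2 - jsDiv p₀ p₁ := by
    rw [bceLoss_bayesClassifier hs, jsDiv_eq_log_two_add hs h₀1 h₁1]
    ring
  exact ⟨fun yhat hy₀ hy₁ => h_opt ▸ bceLoss_bayesClassifier_le h₀ h₁ hy₀ hy₁, h_opt⟩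

/-- the optimal cross-entropy loss equals `ln 2` minus the
Jensen–Shannon divergence, and is a lower bound for any classifier. -/
theorem stmt14 {X : Type*} [Fintype X] [Nonempty X]
    (p₀ p₁ : X → ℝ)
    (h₀ : ∀ x, 0 < p₀ x) (h₀1 : ∑ x : X, p₀ x = 1)
    (h₁ : ∀ x, 0 < p₁ x) (h₁1 : ∑ x : X, p₁ x = 1) :
    (∀ yhat : X → ℝ, (∀ x, 0 < yhat x) → (∀ x, yhat x < 1) →
      Real.log 2 - jsDiv p₀ p₁ ≤ bceLoss p₀ p₁ yhat) ∧
    bceLoss p₀ p₁ (fun x => p₁ x / (p₀ x + p₁ x)) = Real.log 2 - jsDiv p₀ p₁ :=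
  stmt14_general p₀ p₁ h₀ h₀1 h₁ h₁1
end

section
/- (Bound on the optimal GAN fidelity.) Let Γ be a finite nonempty set of parameter values, let γ ∈ Γ, and assume each map γ' ↦ P(x|γ') is differentiable at γ. Define the normalization 𝒩(x) = Σ_{γ'∈Γ} P(x|γ') and the optimal GAN fidelity F_GAN^opt(γ) = −Σ_{x∈𝒳} P(x|γ) (1/𝒩(x)) ∂P(x|γ)/∂γ. Then F_GAN^opt(γ) ≤ Σ_{x∈𝒳} |∂P(x|γ)/∂γ| ≤ √F(γ). -/
open Finset Real

/-- bound on the optimal GAN fidelity by the ℓ¹-norm of the derivative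
of the family and by `√F(γ)`. -/
theorem stmt16 {X : Type*} [Fintype X] [Nonempty X]
    (I : Set ℝ) (hIopen : IsOpen I) (hIconn : I.OrdConnected)
    (P : ℝ → X → ℝ)
    (hpos : ∀ γ ∈ I, ∀ x : X, 0 < P γ x)
    (hsum : ∀ γ ∈ I, ∑ x : X, P γ x = 1)
    (hdiff : ∀ x : X, ∀ γ ∈ I, DifferentiableAt ℝ (fun t => P t x) γ)
    (G : Finset ℝ) (hG : G.Nonempty) (hGI : ↑G ⊆ I)
    (γ : ℝ) (hγ : γ ∈ G) :
    -(∑ x : X, P γ x * (1 / ∑ γ' ∈ G, P γ' x) * deriv (fun t => P t x) γ)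
      ≤ ∑ x : X, |deriv (fun t => P t x) γ| ∧
    ∑ x : X, |deriv (fun t => P t x) γ|
      ≤ Real.sqrt (∑ x : X, (deriv (fun t => P t x) γ) ^ 2 / P γ x) := by
  have hγI : γ ∈ I := hGI hγ
  have hPpos : ∀ x : X, 0 < P γ x := hpos γ hγI
  have hNpos : ∀ x : X, 0 < ∑ γ' ∈ G, P γ' x := fun x =>
    Finset.sum_pos (fun γ' hγ' => hpos γ' (hGI hγ') x) hG
  have hratio : ∀ x : X, P γ x * (1 / ∑ γ' ∈ G, P γ' x) ≤ 1 := by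
    intro x
    rw [mul_one_div, div_le_one (hNpos x)]
    exact Finset.single_le_sum (fun γ' hγ' => (hpos γ' (hGI hγ') x).le) hγ
  constructor
  · rw [← Finset.sum_neg_distrib]
    apply Finset.sum_le_sum
    intro x _
    have h1 : -(P γ x * (1 / ∑ γ' ∈ G, P γ' x) * deriv (fun t => P t x) γ)
        ≤ |P γ x * (1 / ∑ γ' ∈ G, P γ' x) * deriv (fun t => P t x) γ| :=
      neg_le_abs _
    refine h1.trans ?_
    rw [abs_mul]
    have hr : |P γ x * (1 / ∑ γ' ∈ G, P γ' x)| ≤ 1 := by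
      rw [abs_of_nonneg (mul_nonneg (hPpos x).le (one_div_nonneg.mpr (hNpos x).le))]
      exact hratio x
    calc |P γ x * (1 / ∑ γ' ∈ G, P γ' x)| * |deriv (fun t => P t x) γ|
        ≤ 1 * |deriv (fun t => P t x) γ| :=
          mul_le_mul_of_nonneg_right hr (abs_nonneg _)
      _ = _ := one_mul _
  · have key : (∑ x : X, |deriv (fun t => P t x) γ|) ^ 2
        ≤ (∑ x : X, (deriv (fun t => P t x) γ) ^ 2 / P γ x) * ∑ x : X, P γ x := by
      have := Finset.sum_mul_sq_le_sq_mul_sq Finset.univ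
        (fun x : X => |deriv (fun t => P t x) γ| / Real.sqrt (P γ x))
        (fun x : X => Real.sqrt (P γ x))
      have heq : ∀ x : X, |deriv (fun t => P t x) γ| / Real.sqrt (P γ x)
          * Real.sqrt (P γ x) = |deriv (fun t => P t x) γ| := by
        intro x
        rw [div_mul_cancel₀]
        exact (Real.sqrt_pos.mpr (hPpos x)).ne'
      rw [Finset.sum_congr rfl (fun x _ => heq x)] at this
      refine this.trans_eq ?_
      congr 1
      · apply Finset.sum_congr rfl
        intro x _
        rw [div_pow, Real.sq_sqrt (hPpos x).le, sq_abs]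
      · apply Finset.sum_congr rfl
        intro x _
        exact Real.sq_sqrt (hPpos x).le
    rw [hsum γ hγI, mul_one] at key
    have h0 : 0 ≤ ∑ x : X, |deriv (fun t => P t x) γ| :=
      Finset.sum_nonneg (fun x _ => abs_nonneg _)
    exact (Real.le_sqrt h0 (Finset.sum_nonneg fun x _ => div_nonneg (sq_nonneg _) (hPpos x).le)).mpr key
end
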